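/- arXiv:1607.04021 — 2 statements merged into one kernel-verified Lean document; each statement's English description precedes it below -/
import Mathlib

section
/- If (u, v) is a solution of the double-beam system, then there exist positive integers n₁ < n₂ < n₃ and real numbers α₁, α₂, α₃, γ₁, γ₂, γ₃ such that u(x) = α₁·e_{n₁}(x) + α₂·e_{n₂}(x) + α₃·e_{n₃}(x) and v(x) = γ₁·e_{n₁}(x) + γ₂·e_{n₂}(x) + γ₃·e_{n₃}(x) for all x ∈ [0,1], and moreover, for each i ∈ {1,2,3}, αᵢ = 0 if and only if γᵢ = 0. In particular, every solution is a linear combination of at most three of the eigenfunctions e_n. -/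
open Real Set

noncomputable def ee (n : ℕ) : ℝ → ℝ := fun x => Real.sqrt 2 * Real.sin (n * Real.pi * x)

noncomputable def lam (n : ℕ) : ℝ := (n : ℝ) ^ 2 * Real.pi ^ 2

noncomputable def energy (u : ℝ → ℝ) : ℝ := ∫ s in (0:ℝ)..1, (deriv u s) ^ 2

/-- `(u, v)` is a solution of the double-beam system with parameters `β ϱ k`. -/
def DBSol (β ϱ k : ℝ) (u v : ℝ → ℝ) : Prop :=
  ContDiff ℝ 4 u ∧ ContDiff ℝ 4 v ∧
  (∀ x ∈ Set.Icc (0:ℝ) 1,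
    iteratedDeriv 4 u x - (β + ϱ * energy u) * iteratedDeriv 2 u x + k * (u x - v x) = 0) ∧
  (∀ x ∈ Set.Icc (0:ℝ) 1,
    iteratedDeriv 4 v x - (β + ϱ * energy v) * iteratedDeriv 2 v x - k * (u x - v x) = 0) ∧
  u 0 = 0 ∧ u 1 = 0 ∧ iteratedDeriv 2 u 0 = 0 ∧ iteratedDeriv 2 u 1 = 0 ∧
  v 0 = 0 ∧ v 1 = 0 ∧ iteratedDeriv 2 v 0 = 0 ∧ iteratedDeriv 2 v 1 = 0

/-! ### Auxiliary lemmas -/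

section Aux

open MeasureTheory intervalIntegral AddCircle Complex

set_option maxHeartbeats 1600000

lemma ee_contDiff (n : ℕ) : ContDiff ℝ ⊤ (ee n) := by
  unfold ee
  exact contDiff_const.mul (Real.contDiff_sin.comp ((contDiff_const.mul contDiff_id)))

lemma ee_zero (n : ℕ) : ee n 0 = 0 := by simp [ee]

lemma ee_one (n : ℕ) : ee n 1 = 0 := by
  simp only [ee, mul_one]
  rw [Real.sin_nat_mul_pi n, mul_zero]

lemma deriv_ee (n : ℕ) : deriv (ee n) = fun x => Real.sqrt 2 * (n * Real.pi) * Real.cos (n * Real.pi * x) := by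
  ext x
  have h : HasDerivAt (ee n) (Real.sqrt 2 * (n * Real.pi) * Real.cos (n * Real.pi * x)) x := by
    have h1 : HasDerivAt (fun x : ℝ => n * Real.pi * x) (n * Real.pi) x := by
      simpa using (hasDerivAt_id x).const_mul ((n : ℝ) * Real.pi)
    have := (Real.hasDerivAt_sin (n * Real.pi * x)).comp x h1
    have : HasDerivAt (ee n)
        (Real.sqrt 2 * (Real.cos (n * Real.pi * x) * (n * Real.pi))) x := this.const_mul (Real.sqrt 2)
    convert this using 1; ring
  exact h.deriv

lemma iteratedDeriv_two_ee (n : ℕ) : iteratedDeriv 2 (ee n) = fun x => -lam n * ee n x := by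
  rw [iteratedDeriv_succ, iteratedDeriv_one, deriv_ee]
  ext x
  have h1 : HasDerivAt (fun x : ℝ => n * Real.pi * x) (n * Real.pi) x := by
    simpa using (hasDerivAt_id x).const_mul ((n : ℝ) * Real.pi)
  have h2 := ((Real.hasDerivAt_cos (n * Real.pi * x)).comp x h1).const_mul (Real.sqrt 2 * (n * Real.pi))
  have h3 : HasDerivAt (fun x => Real.sqrt 2 * (n * Real.pi) * Real.cos (n * Real.pi * x))
      (Real.sqrt 2 * (n * Real.pi) * (-Real.sin (n * Real.pi * x) * (n * Real.pi))) x := h2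
  rw [h3.deriv]
  unfold lam ee; ring

lemma cd_deriv {f : ℝ → ℝ} {n : ℕ} (hf : ContDiff ℝ (n+1) f) : ContDiff ℝ n (deriv f) :=
  ((contDiff_succ_iff_deriv).1 hf).2.2

lemma cd_hasDerivAt {f : ℝ → ℝ} (hf : ContDiff ℝ 1 f) (x : ℝ) : HasDerivAt f (deriv f x) x :=
  ((hf.differentiable one_ne_zero) x).hasDerivAt

/-- key integration by parts: ∫ f'' g = ∫ f g'' when f,g vanish at 0,1. -/
lemma parts2 {f g : ℝ → ℝ} (hf : ContDiff ℝ 2 f) (hg : ContDiff ℝ 2 g)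
    (hf0 : f 0 = 0) (hf1 : f 1 = 0) (hg0 : g 0 = 0) (hg1 : g 1 = 0) :
    ∫ x in (0:ℝ)..1, iteratedDeriv 2 f x * g x = ∫ x in (0:ℝ)..1, f x * iteratedDeriv 2 g x := by
  have hf1' : ContDiff ℝ 1 f := hf.of_le (by norm_num)
  have hg1' : ContDiff ℝ 1 g := hg.of_le (by norm_num)
  have hfd : ContDiff ℝ 1 (deriv f) := cd_deriv (by exact_mod_cast hf)
  have hgd : ContDiff ℝ 1 (deriv g) := cd_deriv (by exact_mod_cast hg)
  have h2f : iteratedDeriv 2 f = deriv (deriv f) := by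
    rw [iteratedDeriv_succ, iteratedDeriv_one]
  have h2g : iteratedDeriv 2 g = deriv (deriv g) := by
    rw [iteratedDeriv_succ, iteratedDeriv_one]
  have key : ∀ (p q : ℝ → ℝ), ContDiff ℝ 1 p → ContDiff ℝ 1 q → ContDiff ℝ 1 (deriv q) →
      p 0 = 0 → p 1 = 0 →
      (∫ x in (0:ℝ)..1, p x * deriv (deriv q) x) = - ∫ x in (0:ℝ)..1, deriv p x * deriv q x := by
    intro p q hp hq hdq hp0 hp1
    have := integral_mul_deriv_eq_deriv_mul
      (u := p) (u' := deriv p) (v := deriv q) (v' := deriv (deriv q))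
      (fun x _ => cd_hasDerivAt hp x) (fun x _ => cd_hasDerivAt hdq x)
      ((hp.continuous_deriv le_rfl).intervalIntegrable 0 1)
      ((hdq.continuous_deriv le_rfl).intervalIntegrable 0 1)
    rw [this, hp0, hp1]; ring
  rw [h2f, h2g]
  have e1 : (∫ x in (0:ℝ)..1, deriv (deriv f) x * g x) = ∫ x in (0:ℝ)..1, g x * deriv (deriv f) x := by
    congr 1; ext x; ring
  rw [e1, key g f hg1' hf1' hfd hg0 hg1, key f g hf1' hg1' hgd hf0 hf1]
  congr 1; congr 1; ext x; ring

lemma iter2_contDiff {f : ℝ → ℝ} (hf : ContDiff ℝ 4 f) : ContDiff ℝ 2 (iteratedDeriv 2 f) := by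
  rw [iteratedDeriv_succ, iteratedDeriv_one]
  have h3 : ContDiff ℝ 3 (deriv f) := cd_deriv (n := 3) (by exact_mod_cast hf)
  exact cd_deriv (n := 2) (by exact_mod_cast h3)

lemma iter4_eq {f : ℝ → ℝ} : iteratedDeriv 4 f = iteratedDeriv 2 (iteratedDeriv 2 f) := by
  simp only [iteratedDeriv_succ, iteratedDeriv_zero]

lemma coeff2 {f : ℝ → ℝ} (hf : ContDiff ℝ 2 f) (hf0 : f 0 = 0) (hf1 : f 1 = 0) (n : ℕ) :
    (∫ x in (0:ℝ)..1, iteratedDeriv 2 f x * ee n x)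
      = -(lam n) * ∫ x in (0:ℝ)..1, f x * ee n x := by
  rw [parts2 hf ((ee_contDiff n).of_le le_top) hf0 hf1 (ee_zero n) (ee_one n),
    iteratedDeriv_two_ee]
  rw [← intervalIntegral.integral_const_mul]
  congr 1; ext x; ring

lemma coeff4 {f : ℝ → ℝ} (hf : ContDiff ℝ 4 f) (hf0 : f 0 = 0) (hf1 : f 1 = 0)
    (hf20 : iteratedDeriv 2 f 0 = 0) (hf21 : iteratedDeriv 2 f 1 = 0) (n : ℕ) :
    (∫ x in (0:ℝ)..1, iteratedDeriv 4 f x * ee n x)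
      = (lam n)^2 * ∫ x in (0:ℝ)..1, f x * ee n x := by
  rw [iter4_eq, coeff2 (iter2_contDiff hf) hf20 hf21,
    coeff2 (hf.of_le (by norm_num)) hf0 hf1]
  ring

lemma lam_inj {m n : ℕ} (h : m ≠ n) : lam m ≠ lam n := by
  unfold lam
  have hpi := Real.pi_pos
  intro he
  have hpi2 : (0:ℝ) < Real.pi ^ 2 := by positivity
  have : (m:ℝ)^2 = (n:ℝ)^2 := by
    have h0 : ((m:ℝ)^2 - (n:ℝ)^2) * Real.pi ^ 2 = 0 := by linarith
    rcases mul_eq_zero.1 h0 with h0 | h0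
    · linarith
    · linarith
  have : (m:ℝ) = n := by
    have hm : (0:ℝ) ≤ m := Nat.cast_nonneg m
    have hn : (0:ℝ) ≤ n := Nat.cast_nonneg n
    nlinarith
  exact h (by exact_mod_cast this)

lemma ee_ortho {m n : ℕ} (h : m ≠ n) : ∫ x in (0:ℝ)..1, ee m x * ee n x = 0 := by
  have h1 := parts2 ((ee_contDiff m).of_le le_top) ((ee_contDiff n).of_le le_top)
    (ee_zero m) (ee_one m) (ee_zero n) (ee_one n)
  rw [iteratedDeriv_two_ee, iteratedDeriv_two_ee] at h1
  simp only at h1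
  have h2 : (∫ x in (0:ℝ)..1, -lam m * ee m x * ee n x)
      = -lam m * ∫ x in (0:ℝ)..1, ee m x * ee n x := by
    rw [← intervalIntegral.integral_const_mul]; congr 1; ext x; ring
  have h3 : (∫ x in (0:ℝ)..1, ee m x * (-lam n * ee n x))
      = -lam n * ∫ x in (0:ℝ)..1, ee m x * ee n x := by
    rw [← intervalIntegral.integral_const_mul]; congr 1; ext x; ring
  rw [h2, h3] at h1
  have := lam_inj h
  by_contra hI
  apply this
  have := mul_right_cancel₀ hI h1
  linarith

lemma ee_norm {n : ℕ} (hn : 0 < n) : ∫ x in (0:ℝ)..1, ee n x * ee n x = 1 := by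
  have hc : ((n:ℝ) * Real.pi) ≠ 0 := by
    positivity
  have key : (∫ x in (0:ℝ)..1, Real.sin ((n:ℝ) * Real.pi * x) ^ 2) = 1/2 := by
    have := mul_integral_comp_mul_left (a := (0:ℝ)) (b := 1) (c := (n:ℝ) * Real.pi)
      (f := fun t => Real.sin t ^ 2)
    simp only [mul_zero, mul_one] at this
    rw [integral_sin_sq] at this
    simp only [Real.sin_zero, Real.cos_zero, zero_mul] at this
    rw [Real.sin_nat_mul_pi n] at this
    have h2 : (n:ℝ) * Real.pi * ((∫ x in (0:ℝ)..1, Real.sin ((n:ℝ) * Real.pi * x) ^ 2) * 2)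
        = (n:ℝ) * Real.pi * 1 := by ring_nf; ring_nf at this; linarith
    have := mul_left_cancel₀ hc h2
    linarith
  have : (∫ x in (0:ℝ)..1, ee n x * ee n x)
      = 2 * ∫ x in (0:ℝ)..1, Real.sin ((n:ℝ) * Real.pi * x) ^ 2 := by
    rw [← intervalIntegral.integral_const_mul]
    congr 1; ext x
    unfold ee
    have : Real.sqrt 2 * Real.sqrt 2 = 2 := Real.mul_self_sqrt (by norm_num)
    nlinarith [this]
  rw [this, key]; norm_num

lemma fourier_inj {T : ℝ} [hT : Fact (0 < T)] (F : C(AddCircle T, ℂ))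
    (h : ∀ m : ℤ, fourierCoeff (⇑F) m = 0) : ∀ z, F z = 0 := by
  have hmem : ∀ m : ℤ, fourierCoeff ((ContinuousMap.toLp 2 haarAddCircle ℂ F : Lp ℂ 2 haarAddCircle)) m = 0 := by
    intro m
    rw [fourierCoeff_toLp]
    exact h m
  have hrepr : fourierBasis.repr (ContinuousMap.toLp 2 haarAddCircle ℂ F) = 0 := by
    ext m
    rw [fourierBasis_repr]
    simpa using hmem m
  have h0 : (ContinuousMap.toLp 2 haarAddCircle ℂ F : Lp ℂ 2 haarAddCircle) = 0 := by
    apply fourierBasis.repr.injective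
    rw [hrepr]; simp
  have hae : ⇑F =ᵐ[(haarAddCircle : Measure (AddCircle T))] 0 := by
    have h1 := ContinuousMap.coeFn_toLp (p := 2) (μ := (haarAddCircle : Measure (AddCircle T))) (𝕜 := ℂ) F
    rw [h0] at h1
    exact (Lp.coeFn_zero ℂ 2 _).symm.trans h1 |>.symm
  have := (F.continuous.ae_eq_iff_eq (haarAddCircle : Measure (AddCircle T)) continuous_const).mp hae
  intro z; exact congrFun this z

lemma sine_complete {w : ℝ → ℝ} (hwc : Continuous w) (hw0 : w 0 = 0) (hw1 : w 1 = 0)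
    (hcoef : ∀ n : ℕ, 0 < n → ∫ x in (0:ℝ)..1, w x * Real.sin (n * Real.pi * x) = 0) :
    ∀ x ∈ Icc (0:ℝ) 1, w x = 0 := by
  haveI : Fact ((0:ℝ) < 2) := ⟨by norm_num⟩
  have hcoefZ : ∀ m : ℤ, (∫ x in (0:ℝ)..1, w x * Real.sin (m * Real.pi * x)) = 0 := by
    intro m
    rcases lt_trichotomy m 0 with hm | hm | hm
    · have hn : 0 < (-m).toNat := by omega
      have h1 := hcoef (-m).toNat hn
      have h2 : ∀ x : ℝ, Real.sin ((m:ℝ) * Real.pi * x)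
          = - Real.sin ((((-m).toNat : ℕ) : ℝ) * Real.pi * x) := by
        intro x
        have hc : (((-m).toNat : ℕ) : ℝ) = -(m : ℝ) := by
          rw [show (((-m).toNat : ℕ) : ℝ) = ((((-m).toNat : ℕ) : ℤ) : ℝ) by push_cast; ring,
            Int.toNat_of_nonneg (by omega : (0:ℤ) ≤ -m)]
          push_cast; ring
        rw [hc, show (-(m:ℝ)) * Real.pi * x = -((m:ℝ) * Real.pi * x) by ring, Real.sin_neg]
        ring
      calc (∫ x in (0:ℝ)..1, w x * Real.sin (m * Real.pi * x))
          = ∫ x in (0:ℝ)..1, -(w x * Real.sin ((((-m).toNat : ℕ):ℝ) * Real.pi * x)) := by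
            congr 1; ext x; rw [h2 x]; ring
        _ = 0 := by rw [intervalIntegral.integral_neg, h1, neg_zero]
    · subst hm; simp
    · have hn : 0 < m.toNat := by omega
      have h1 := hcoef m.toNat hn
      have hc : ((m.toNat : ℕ) : ℝ) = (m : ℝ) := by
        rw [show ((m.toNat : ℕ) : ℝ) = (((m.toNat : ℕ) : ℤ) : ℝ) by push_cast; ring,
          Int.toNat_of_nonneg (by omega : (0:ℤ) ≤ m)]
      rw [← hc]; exact h1
  set g : ℝ → ℝ := fun x => w (min x 1) - w (min (2 - x) 1) with hg
  have hgc : Continuous g := by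
    apply Continuous.sub
    · exact hwc.comp (continuous_id.min continuous_const)
    · exact hwc.comp ((continuous_const.sub continuous_id).min continuous_const)
  have hg_on : ∀ x ∈ Icc (0:ℝ) 1, g x = w x := by
    intro x hx
    simp only [hg]
    rw [min_eq_left hx.2, min_eq_right (by linarith [hx.1, hx.2] : (1:ℝ) ≤ 2 - x), hw1, sub_zero]
  have hg_on' : ∀ x ∈ Icc (1:ℝ) 2, g x = - w (2 - x) := by
    intro x hx
    simp only [hg]
    rw [min_eq_right hx.1, min_eq_left (by linarith [hx.1, hx.2] : (2:ℝ) - x ≤ 1), hw1, zero_sub]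
  set gc : ℝ → ℂ := fun x => (g x : ℂ) with hgcdef
  have hgcc : Continuous gc := Complex.continuous_ofReal.comp hgc
  set F : AddCircle (2:ℝ) → ℂ := AddCircle.liftIco 2 0 gc with hF
  have hg02 : gc 0 = gc (0 + 2) := by
    simp only [hgcdef, hg]
    norm_num [hw0, hw1]
  have hFc : Continuous F := AddCircle.liftIco_continuous hg02 hgcc.continuousOn
  have hmain : ∀ m : ℤ,
      (∫ (x : ℝ) in (0:ℝ)..2, cexp (-(2 * ↑π * Complex.I * ↑m * ↑x) / 2) * gc x) = 0 := by
    intro m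
    set E : ℝ → ℂ := fun x => cexp (-(2 * ↑π * Complex.I * ↑m * ↑x) / 2) with hE
    have hEc : Continuous E := by
      apply Complex.continuous_exp.comp
      continuity
    have hint : ∀ (h : ℝ → ℝ), Continuous h → ∀ (a b : ℝ),
        IntervalIntegrable (fun x => E x * (h x : ℂ)) volume a b := by
      intro h hh a b
      exact (hEc.mul (Complex.continuous_ofReal.comp hh)).intervalIntegrable a b
    have hsplit : (∫ x in (0:ℝ)..2, E x * gc x)
        = (∫ x in (0:ℝ)..1, E x * gc x) + ∫ x in (1:ℝ)..2, E x * gc x := by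
      rw [intervalIntegral.integral_add_adjacent_intervals]
      · rw [hgcdef]; exact hint g hgc 0 1
      · rw [hgcdef]; exact hint g hgc 1 2
    have hpart1 : (∫ x in (0:ℝ)..1, E x * gc x) = ∫ x in (0:ℝ)..1, E x * (w x : ℂ) := by
      apply intervalIntegral.integral_congr
      intro x hx
      rw [uIcc_of_le (by norm_num : (0:ℝ) ≤ 1)] at hx
      rw [hgcdef]; simp only []
      rw [hg_on x hx]
    have hexp2 : ∀ t : ℝ, E (2 - t) = cexp ((2 * ↑π * Complex.I * ↑m * ↑t) / 2) := by
      intro t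
      rw [hE]
      simp only []
      rw [show -(2 * (π:ℂ) * Complex.I * ↑m * ↑(2 - t)) / 2
          = ((-m : ℤ) : ℂ) * (2 * ↑π * Complex.I) + (2 * ↑π * Complex.I * ↑m * ↑t) / 2 by
        push_cast; ring]
      rw [Complex.exp_add, Complex.exp_int_mul_two_pi_mul_I, one_mul]
    have hpart2 : (∫ x in (1:ℝ)..2, E x * gc x)
        = ∫ x in (0:ℝ)..1, -(cexp ((2 * ↑π * Complex.I * ↑m * ↑x) / 2) * (w x : ℂ)) := by
      have h1 : (∫ x in (1:ℝ)..2, E x * gc x)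
          = ∫ x in (1:ℝ)..2, (fun t => E (2 - t) * (-(w t) : ℂ)) (2 - x) := by
        apply intervalIntegral.integral_congr
        intro x hx
        rw [uIcc_of_le (by norm_num : (1:ℝ) ≤ 2)] at hx
        simp only []
        rw [show (2:ℝ) - (2 - x) = x by ring, hgcdef]
        simp only []
        rw [hg_on' x hx]
        push_cast; ring
      rw [h1, intervalIntegral.integral_comp_sub_left (fun t => E (2 - t) * (-(w t) : ℂ)) 2]
      norm_num
      apply intervalIntegral.integral_congr
      intro x hx
      simp only []
      rw [hexp2 x]
    rw [hsplit, hpart1, hpart2, ← intervalIntegral.integral_add]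
    · have hptw : ∀ x : ℝ, E x * (w x : ℂ) + -(cexp ((2 * ↑π * Complex.I * ↑m * ↑x) / 2) * (w x : ℂ))
          = (-2 * Complex.I) * ((w x * Real.sin (m * π * x) : ℝ) : ℂ) := by
        intro x
        rw [hE]
        simp only []
        rw [show ((w x * Real.sin (m * π * x) : ℝ) : ℂ) = (w x : ℂ) * ((Real.sin (m * π * x) : ℝ) : ℂ) by push_cast; ring]
        rw [Complex.ofReal_sin]
        rw [Complex.sin, show ((((m:ℝ) * π * x : ℝ)) : ℂ) = (m : ℂ) * ↑π * ↑x by push_cast; ring]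
        rw [show -(2 * (π:ℂ) * Complex.I * ↑m * ↑x) / 2 = -((m:ℂ) * ↑π * ↑x) * Complex.I by ring,
            show (2 * (π:ℂ) * Complex.I * ↑m * ↑x) / 2 = ((m:ℂ) * ↑π * ↑x) * Complex.I by ring]
        field_simp
        ring_nf
        rw [Complex.I_sq]
        ring
      simp only [hptw]
      rw [intervalIntegral.integral_const_mul]
      rw [intervalIntegral.integral_ofReal]
      rw [hcoefZ m]
      simp
    · exact hint w hwc 0 1
    · apply Continuous.intervalIntegrable
      have : Continuous (fun x : ℝ => cexp ((2 * ↑π * Complex.I * ↑m * ↑x) / 2)) := by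
        apply Complex.continuous_exp.comp; continuity
      exact (this.mul (Complex.continuous_ofReal.comp hwc)).neg
  have hcoefF : ∀ m : ℤ, fourierCoeff F m = 0 := by
    intro m
    rw [hF, fourierCoeff_liftIco_eq, fourierCoeffOn_eq_integral]
    simp only [fourier_coe_apply, smul_eq_mul]
    norm_num
    exact hmain m
  have hF0 := fourier_inj ⟨F, hFc⟩ hcoefF
  intro x hx
  rcases eq_or_lt_of_le hx.2 with h1 | h1
  · rw [h1]; exact hw1
  · have hIco : x ∈ Ico (0:ℝ) 2 := ⟨hx.1, by linarith⟩
    have := hF0 ((x : ℝ) : AddCircle (2:ℝ))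
    simp only [ContinuousMap.coe_mk] at this
    rw [hF] at this
    rw [AddCircle.liftIco_zero_coe_apply hIco] at this
    rw [hgcdef] at this
    simp only [] at this
    rw [← hg_on x hx]
    exact_mod_cast this

lemma pick_three (s : Finset ℕ) (hcard : s.card ≤ 3) (hpos : ∀ n ∈ s, 0 < n) :
    ∃ n₁ n₂ n₃ : ℕ, 0 < n₁ ∧ n₁ < n₂ ∧ n₂ < n₃ ∧ ∀ n ∈ s, n = n₁ ∨ n = n₂ ∨ n = n₃ := by
  haveI : Infinite {n : ℕ // 0 < n} :=
    Infinite.of_injective (fun n => ⟨n + 1, Nat.succ_pos n⟩)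
      (fun a b hab => by simpa using hab)
  set s' : Finset {n : ℕ // 0 < n} := s.subtype _ with hs'
  have hcard' : s'.card ≤ 3 := by
    refine le_trans ?_ hcard
    exact le_trans (Finset.card_subtype _ _).le (Finset.card_filter_le _ _)
  obtain ⟨t, hst, htcard⟩ := Infinite.exists_superset_card_eq s' 3 hcard'
  set l := t.sort (· ≤ ·) with hl
  have hlen : l.length = 3 := by rw [hl, Finset.length_sort, htcard]
  have hsorted : l.Pairwise (· < ·) := t.sortedLT_sort.pairwise
  match hm : l, hlen with
  | [a, b, c], _ =>
    simp only [List.pairwise_cons, List.mem_cons, List.not_mem_nil, or_false,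
      List.mem_singleton, forall_eq_or_imp, forall_eq] at hsorted
    refine ⟨a.1, b.1, c.1, a.2, ?_, ?_, ?_⟩
    · exact_mod_cast hsorted.1.1
    · exact_mod_cast hsorted.2.1
    · intro n hn
      have hn' : (⟨n, hpos n hn⟩ : {n : ℕ // 0 < n}) ∈ t := by
        apply hst
        rw [hs', Finset.mem_subtype]
        exact hn
      rw [← Finset.mem_sort (· ≤ ·), ← hl] at hn'
      simp only [List.mem_cons, List.not_mem_nil, or_false] at hn'
      rcases hn' with h | h | h
      · left; exact congrArg Subtype.val h
      · right; left; exact congrArg Subtype.val h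
      · right; right; exact congrArg Subtype.val h

lemma count_roots (c2 c1 c0 : ℝ) (s : Set ℕ)
    (hs : ∀ n ∈ s, (lam n)^3 + c2*(lam n)^2 + c1*(lam n) + c0 = 0)
    (hpos : ∀ n ∈ s, 0 < n) :
    ∃ n₁ n₂ n₃ : ℕ, 0 < n₁ ∧ n₁ < n₂ ∧ n₂ < n₃ ∧ ∀ n ∈ s, n = n₁ ∨ n = n₂ ∨ n = n₃ := by
  classical
  set q : Polynomial ℝ := Polynomial.X^3 + Polynomial.C c2 * Polynomial.X^2
    + Polynomial.C c1 * Polynomial.X + Polynomial.C c0 with hq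
  have hqdeg : q.natDegree = 3 := by
    rw [hq]
    compute_degree!
  have hq0 : q ≠ 0 := fun h => by simp [h] at hqdeg
  have hroot : ∀ n ∈ s, lam n ∈ q.roots := by
    intro n hn
    rw [Polynomial.mem_roots hq0]
    have := hs n hn
    simp only [Polynomial.IsRoot, hq]
    simp [Polynomial.eval_add, Polynomial.eval_mul, Polynomial.eval_pow]
    linarith
  have hfin : s.Finite := by
    have : s ⊆ lam ⁻¹' {x | x ∈ q.roots} := fun n hn => hroot n hn
    apply Set.Finite.subset _ this
    apply Set.Finite.preimage
    · exact fun a _ b _ hab => by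
        by_contra hne
        exact lam_inj hne hab
    · exact q.roots.toFinset.finite_toSet.subset (fun x hx => Multiset.mem_toFinset.2 hx)
  have hcard : hfin.toFinset.card ≤ 3 := by
    have hinj : Set.InjOn lam hfin.toFinset := by
      intro a _ b _ hab
      by_contra hne
      exact lam_inj hne hab
    have := Finset.card_le_card_of_injOn
      (f := lam) (s := hfin.toFinset) (t := q.roots.toFinset)
      (fun n hn => Multiset.mem_toFinset.2 (hroot n (by simpa using hn)))
      (fun a ha b hb hab => hinj ha hb hab)
    refine le_trans this ?_
    calc q.roots.toFinset.card ≤ Multiset.card q.roots := q.roots.toFinset_card_le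
      _ ≤ q.natDegree := q.card_roots'
      _ = 3 := hqdeg
  obtain ⟨n₁, n₂, n₃, h1, h2, h3, h4⟩ := pick_three hfin.toFinset hcard
    (fun n hn => hpos n (by simpa using hn))
  exact ⟨n₁, n₂, n₃, h1, h2, h3, fun n hn => h4 n (by simpa using hn)⟩

lemma split4 {f1 f2 f3 f4 : ℝ → ℝ} (h1 : Continuous f1) (h2 : Continuous f2)
    (h3 : Continuous f3) (h4 : Continuous f4) (c2 c3 c4 : ℝ) :
    (∫ x in (0:ℝ)..1, (f1 x + c2 * f2 x + (c3 * f3 x + c4 * f4 x)))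
      = (∫ x in (0:ℝ)..1, f1 x) + c2 * (∫ x in (0:ℝ)..1, f2 x)
        + (c3 * (∫ x in (0:ℝ)..1, f3 x) + c4 * (∫ x in (0:ℝ)..1, f4 x)) := by
  have i1 := h1.intervalIntegrable (μ := MeasureTheory.volume) 0 1
  have i2 : IntervalIntegrable (fun x => c2 * f2 x) MeasureTheory.volume 0 1 := (continuous_const.mul h2 : Continuous (fun x => c2 * f2 x)).intervalIntegrable (μ := MeasureTheory.volume) 0 1
  have i3 : IntervalIntegrable (fun x => c3 * f3 x) MeasureTheory.volume 0 1 := (continuous_const.mul h3 : Continuous (fun x => c3 * f3 x)).intervalIntegrable (μ := MeasureTheory.volume) 0 1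
  have i4 : IntervalIntegrable (fun x => c4 * f4 x) MeasureTheory.volume 0 1 := (continuous_const.mul h4 : Continuous (fun x => c4 * f4 x)).intervalIntegrable (μ := MeasureTheory.volume) 0 1
  rw [intervalIntegral.integral_add (i1.add i2) (i3.add i4),
    intervalIntegral.integral_add i1 i2, intervalIntegral.integral_add i3 i4,
    intervalIntegral.integral_const_mul, intervalIntegral.integral_const_mul,
    intervalIntegral.integral_const_mul]


lemma repr_three (n₁ n₂ n₃ : ℕ) (h1 : 0 < n₁) (h12 : n₁ < n₂) (h23 : n₂ < n₃)
    (f : ℝ → ℝ) (hf : Continuous f) (hf0 : f 0 = 0) (hf1 : f 1 = 0)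
    (hvanish : ∀ m : ℕ, 0 < m → m ≠ n₁ → m ≠ n₂ → m ≠ n₃ →
      (∫ x in (0:ℝ)..1, f x * ee m x) = 0) :
    ∀ x ∈ Icc (0:ℝ) 1, f x = (∫ x in (0:ℝ)..1, f x * ee n₁ x) * ee n₁ x
      + (∫ x in (0:ℝ)..1, f x * ee n₂ x) * ee n₂ x
      + (∫ x in (0:ℝ)..1, f x * ee n₃ x) * ee n₃ x := by
  have h2 : 0 < n₂ := lt_trans h1 h12
  have h3 : 0 < n₃ := lt_trans h2 h23
  have h13 : n₁ < n₃ := lt_trans h12 h23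
  set c : ℕ → ℝ := fun i => ∫ x in (0:ℝ)..1, f x * ee i x with hc
  set w : ℝ → ℝ := fun x => f x + (-(c n₁)) * ee n₁ x + ((-(c n₂)) * ee n₂ x + (-(c n₃)) * ee n₃ x)
    with hw
  have heecont : ∀ n, Continuous (ee n) := fun n => (ee_contDiff n).continuous
  have hwcont : Continuous w := by
    rw [hw]
    exact (hf.add (continuous_const.mul (heecont n₁))).add
      ((continuous_const.mul (heecont n₂)).add (continuous_const.mul (heecont n₃)))
  have hw0 : w 0 = 0 := by rw [hw]; simp [hf0, ee_zero]
  have hw1 : w 1 = 0 := by rw [hw]; simp [hf1, ee_one]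
  have hwcoef : ∀ m : ℕ, 0 < m → (∫ x in (0:ℝ)..1, w x * ee m x) = 0 := by
    intro m hm
    have hsplit : (∫ x in (0:ℝ)..1, w x * ee m x)
        = (∫ x in (0:ℝ)..1, f x * ee m x)
          + (-(c n₁)) * (∫ x in (0:ℝ)..1, ee n₁ x * ee m x)
          + ((-(c n₂)) * (∫ x in (0:ℝ)..1, ee n₂ x * ee m x)
            + (-(c n₃)) * (∫ x in (0:ℝ)..1, ee n₃ x * ee m x)) := by
      rw [← split4 (f1 := fun x => f x * ee m x) (f2 := fun x => ee n₁ x * ee m x)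
        (f3 := fun x => ee n₂ x * ee m x) (f4 := fun x => ee n₃ x * ee m x) (hf.mul (heecont m)) ((heecont n₁).mul (heecont m))
        ((heecont n₂).mul (heecont m)) ((heecont n₃).mul (heecont m)) (-(c n₁)) (-(c n₂)) (-(c n₃))]
      apply intervalIntegral.integral_congr
      intro x _
      simp only [hw]
      ring
    rw [hsplit]
    by_cases e1 : m = n₁
    · rw [e1]
      rw [ee_norm h1, ee_ortho (show n₂ ≠ n₁ by omega), ee_ortho (show n₃ ≠ n₁ by omega)]
      simp [hc]
    · by_cases e2 : m = n₂
      · rw [e2]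
        rw [ee_norm h2, ee_ortho (show n₁ ≠ n₂ by omega), ee_ortho (show n₃ ≠ n₂ by omega)]
        simp [hc]
      · by_cases e3 : m = n₃
        · rw [e3]
          rw [ee_norm h3, ee_ortho (show n₁ ≠ n₃ by omega), ee_ortho (show n₂ ≠ n₃ by omega)]
          simp [hc]
        · rw [ee_ortho (fun hh => e1 hh.symm), ee_ortho (fun hh => e2 hh.symm),
            ee_ortho (fun hh => e3 hh.symm), hvanish m hm e1 e2 e3]
          simp
  have hsin : ∀ m : ℕ, 0 < m → (∫ x in (0:ℝ)..1, w x * Real.sin (m * Real.pi * x)) = 0 := by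
    intro m hm
    have hs2 : Real.sqrt 2 ≠ 0 := by positivity
    have : (∫ x in (0:ℝ)..1, w x * Real.sin (m * Real.pi * x))
        = (Real.sqrt 2)⁻¹ * ∫ x in (0:ℝ)..1, w x * ee m x := by
      rw [← intervalIntegral.integral_const_mul]
      apply intervalIntegral.integral_congr
      intro x _
      unfold ee
      field_simp
    rw [this, hwcoef m hm, mul_zero]
  have := sine_complete hwcont hw0 hw1 hsin
  intro x hx
  have hx0 := this x hx
  rw [hw] at hx0
  simp only [] at hx0
  simp only [hc] at hx0 ⊢
  linarith

end Aux

theorem stmt1 (β ϱ k : ℝ) (hϱ : 0 < ϱ) (hk : 0 < k)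
    (u v : ℝ → ℝ) (h : DBSol β ϱ k u v) :
    ∃ n₁ n₂ n₃ : ℕ, 0 < n₁ ∧ n₁ < n₂ ∧ n₂ < n₃ ∧
      ∃ α₁ α₂ α₃ γ₁ γ₂ γ₃ : ℝ,
        (∀ x ∈ Set.Icc (0:ℝ) 1, u x = α₁ * ee n₁ x + α₂ * ee n₂ x + α₃ * ee n₃ x) ∧
        (∀ x ∈ Set.Icc (0:ℝ) 1, v x = γ₁ * ee n₁ x + γ₂ * ee n₂ x + γ₃ * ee n₃ x) ∧
        (α₁ = 0 ↔ γ₁ = 0) ∧ (α₂ = 0 ↔ γ₂ = 0) ∧ (α₃ = 0 ↔ γ₃ = 0) := by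
  obtain ⟨hu, hv, hequ, heqv, hu0, hu1, hu20, hu21, hv0, hv1, hv20, hv21⟩ := h
  set a : ℝ := β + ϱ * energy u with ha
  set b : ℝ := β + ϱ * energy v with hb
  set α : ℕ → ℝ := fun n => ∫ x in (0:ℝ)..1, u x * ee n x with hα
  set γ : ℕ → ℝ := fun n => ∫ x in (0:ℝ)..1, v x * ee n x with hγ
  -- continuity facts
  have hucont : Continuous u := hu.continuous
  have hvcont : Continuous v := hv.continuous
  have hu2cont : Continuous (iteratedDeriv 2 u) := hu.continuous_iteratedDeriv 2 (by norm_num)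
  have hv2cont : Continuous (iteratedDeriv 2 v) := hv.continuous_iteratedDeriv 2 (by norm_num)
  have hu4cont : Continuous (iteratedDeriv 4 u) := hu.continuous_iteratedDeriv 4 (by norm_num)
  have hv4cont : Continuous (iteratedDeriv 4 v) := hv.continuous_iteratedDeriv 4 (by norm_num)
  have heecont : ∀ n, Continuous (ee n) := fun n => (ee_contDiff n).continuous
  -- eigен relations
  have hrelu : ∀ n : ℕ, (lam n ^ 2 + a * lam n + k) * α n = k * γ n := by
    intro n
    have hEq : Set.EqOn
        (fun x => (iteratedDeriv 4 u x - a * iteratedDeriv 2 u x + k * (u x - v x)) * ee n x)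
        (fun x => iteratedDeriv 4 u x * ee n x + (-a) * (iteratedDeriv 2 u x * ee n x)
          + (k * (u x * ee n x) + (-k) * (v x * ee n x))) (Set.uIcc 0 1) := by
      intro x _; simp only []; ring
    have hEq0 : Set.EqOn
        (fun x => (iteratedDeriv 4 u x - a * iteratedDeriv 2 u x + k * (u x - v x)) * ee n x)
        (fun _ => (0:ℝ)) (Set.uIcc 0 1) := by
      intro x hx
      rw [uIcc_of_le (by norm_num : (0:ℝ) ≤ 1)] at hx
      simp only []
      rw [hequ x hx, zero_mul]
    have hzero := (intervalIntegral.integral_congr (μ := MeasureTheory.volume) hEq0).symm.trans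
      (intervalIntegral.integral_congr (μ := MeasureTheory.volume) hEq)
    simp only [intervalIntegral.integral_const, smul_eq_mul, mul_zero, sub_zero, zero_mul] at hzero
    rw [split4 (f1 := fun x => iteratedDeriv 4 u x * ee n x) (f2 := fun x => iteratedDeriv 2 u x * ee n x)
      (f3 := fun x => u x * ee n x) (f4 := fun x => v x * ee n x) (hu4cont.mul (heecont n)) (hu2cont.mul (heecont n)) (hucont.mul (heecont n))
      (hvcont.mul (heecont n)) (-a) k (-k)] at hzero
    rw [coeff4 hu hu0 hu1 hu20 hu21 n, coeff2 (hu.of_le (by norm_num)) hu0 hu1 n] at hzero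
    simp only [hα, hγ]
    nlinarith [hzero]
  have hrelv : ∀ n : ℕ, (lam n ^ 2 + b * lam n + k) * γ n = k * α n := by
    intro n
    have hEq : Set.EqOn
        (fun x => (iteratedDeriv 4 v x - b * iteratedDeriv 2 v x - k * (u x - v x)) * ee n x)
        (fun x => iteratedDeriv 4 v x * ee n x + (-b) * (iteratedDeriv 2 v x * ee n x)
          + ((-k) * (u x * ee n x) + k * (v x * ee n x))) (Set.uIcc 0 1) := by
      intro x _; simp only []; ring
    have hEq0 : Set.EqOn
        (fun x => (iteratedDeriv 4 v x - b * iteratedDeriv 2 v x - k * (u x - v x)) * ee n x)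
        (fun _ => (0:ℝ)) (Set.uIcc 0 1) := by
      intro x hx
      rw [uIcc_of_le (by norm_num : (0:ℝ) ≤ 1)] at hx
      simp only []
      rw [heqv x hx, zero_mul]
    have hzero := (intervalIntegral.integral_congr (μ := MeasureTheory.volume) hEq0).symm.trans
      (intervalIntegral.integral_congr (μ := MeasureTheory.volume) hEq)
    simp only [intervalIntegral.integral_const, smul_eq_mul, mul_zero, sub_zero, zero_mul] at hzero
    rw [split4 (f1 := fun x => iteratedDeriv 4 v x * ee n x) (f2 := fun x => iteratedDeriv 2 v x * ee n x)
      (f3 := fun x => u x * ee n x) (f4 := fun x => v x * ee n x) (hv4cont.mul (heecont n)) (hv2cont.mul (heecont n)) (hucont.mul (heecont n))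
      (hvcont.mul (heecont n)) (-b) (-k) k] at hzero
    rw [coeff4 hv hv0 hv1 hv20 hv21 n, coeff2 (hv.of_le (by norm_num)) hv0 hv1 n] at hzero
    simp only [hα, hγ]
    nlinarith [hzero]
  have hiff : ∀ n : ℕ, (α n = 0 ↔ γ n = 0) := by
    intro n
    constructor
    · intro h0
      have := hrelu n
      rw [h0, mul_zero] at this
      have := this.symm
      rcases mul_eq_zero.1 this with h | h
      · exact absurd h (ne_of_gt hk)
      · exact h
    · intro h0
      have := hrelv n
      rw [h0, mul_zero] at this
      have := this.symm
      rcases mul_eq_zero.1 this with h | h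
      · exact absurd h (ne_of_gt hk)
      · exact h
  -- the set of active modes
  set S : Set ℕ := {n : ℕ | 0 < n ∧ α n ≠ 0} with hS
  have hcubic : ∀ n ∈ S, (lam n)^3 + (a+b)*(lam n)^2 + (a*b+2*k)*(lam n) + ((a+b)*k) = 0 := by
    intro n hn
    obtain ⟨hnpos, hαn⟩ := hn
    have hγn : γ n ≠ 0 := fun h0 => hαn ((hiff n).2 h0)
    have h1 := hrelu n
    have h2 := hrelv n
    have hlampos : 0 < lam n := by
      unfold lam
      have : 0 < (n:ℝ) := by exact_mod_cast hnpos
      positivity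
    -- multiply the relations
    have hprod : (lam n ^ 2 + a * lam n + k) * (lam n ^ 2 + b * lam n + k) * (α n * γ n)
        = k^2 * (α n * γ n) := by
      calc (lam n ^ 2 + a * lam n + k) * (lam n ^ 2 + b * lam n + k) * (α n * γ n)
          = ((lam n ^ 2 + a * lam n + k) * α n) * ((lam n ^ 2 + b * lam n + k) * γ n) := by ring
        _ = (k * γ n) * (k * α n) := by rw [h1, h2]
        _ = k^2 * (α n * γ n) := by ring
    have hαγ : α n * γ n ≠ 0 := mul_ne_zero hαn hγn
    have hP : (lam n ^ 2 + a * lam n + k) * (lam n ^ 2 + b * lam n + k) = k^2 :=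
      mul_right_cancel₀ hαγ hprod
    have hfact : lam n * ((lam n)^3 + (a+b)*(lam n)^2 + (a*b+2*k)*(lam n) + ((a+b)*k)) = 0 := by
      nlinarith [hP]
    rcases mul_eq_zero.1 hfact with h | h
    · exact absurd h (ne_of_gt hlampos)
    · exact h
  have hSpos : ∀ n ∈ S, 0 < n := fun n hn => hn.1
  obtain ⟨n₁, n₂, n₃, hn1, hn12, hn23, hsub⟩ := count_roots (a+b) (a*b+2*k) ((a+b)*k) S hcubic hSpos
  have hn2 : 0 < n₂ := lt_trans hn1 hn12
  have hn3 : 0 < n₃ := lt_trans hn2 hn23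
  refine ⟨n₁, n₂, n₃, hn1, hn12, hn23, α n₁, α n₂, α n₃, γ n₁, γ n₂, γ n₃, ?_, ?_,
    hiff n₁, hiff n₂, hiff n₃⟩
  · have hvan : ∀ m : ℕ, 0 < m → m ≠ n₁ → m ≠ n₂ → m ≠ n₃ →
        (∫ x in (0:ℝ)..1, u x * ee m x) = 0 := by
      intro m hm e1 e2 e3
      by_contra hne
      have hmS : m ∈ S := ⟨hm, by simpa [hα] using hne⟩
      rcases hsub m hmS with hh | hh | hh
      · exact e1 hh
      · exact e2 hh
      · exact e3 hh
    have hrep := repr_three n₁ n₂ n₃ hn1 hn12 hn23 u hucont hu0 hu1 hvan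
    intro x hx
    simpa [hα] using hrep x hx
  · have hvan : ∀ m : ℕ, 0 < m → m ≠ n₁ → m ≠ n₂ → m ≠ n₃ →
        (∫ x in (0:ℝ)..1, v x * ee m x) = 0 := by
      intro m hm e1 e2 e3
      by_contra hne
      have hγm : γ m ≠ 0 := by simpa [hγ] using hne
      have hαm : α m ≠ 0 := fun h0 => hγm ((hiff m).1 h0)
      have hmS : m ∈ S := ⟨hm, hαm⟩
      rcases hsub m hmS with hh | hh | hh
      · exact e1 hh
      · exact e2 hh
      · exact e3 hh
    have hrep := repr_three n₁ n₂ n₃ hn1 hn12 hn23 v hvcont hv0 hv1 hvan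
    intro x hx
    simpa [hγ] using hrep x hx
end

section
/- Let n₁ < n₂ < n₃ be positive integers and suppose there exist nonzero reals x, y, z, p, q, r such that u = x·e_{n₁} + y·e_{n₂} + z·e_{n₃} and v = p·e_{n₁} + q·e_{n₂} + r·e_{n₃} form a solution of the double-beam system with ∫₀¹ u'(s)² ds = ∫₀¹ v'(s)² ds. Then λ_{n₁} + λ_{n₂} = λ_{n₃}; equivalently, n₁² + n₂² = n₃², i.e. (n₁, n₂, n₃) is a Pythagorean triple. -/
open Real Set

-- antiderivative of cos(c t)
lemma int_cos_pi (j : ℤ) (hj : j ≠ 0) :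
    ∫ t in (0:ℝ)..1, Real.cos ((j:ℝ) * Real.pi * t) = 0 := by
  have hc : (j:ℝ) * Real.pi ≠ 0 := by
    have := Real.pi_ne_zero
    exact mul_ne_zero (by exact_mod_cast hj) this
  have hF : ∀ t : ℝ, HasDerivAt (fun t => Real.sin ((j:ℝ)*Real.pi*t) / ((j:ℝ)*Real.pi))
      (Real.cos ((j:ℝ)*Real.pi*t)) t := by
    intro t
    have h1 : HasDerivAt (fun t : ℝ => (j:ℝ)*Real.pi*t) ((j:ℝ)*Real.pi) t := by
      simpa using (hasDerivAt_id t).const_mul ((j:ℝ)*Real.pi)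
    have := ((Real.hasDerivAt_sin _).comp t h1).div_const ((j:ℝ)*Real.pi)
    have h2 : Real.cos ((j:ℝ)*Real.pi*t) * ((j:ℝ)*Real.pi) / ((j:ℝ)*Real.pi)
        = Real.cos ((j:ℝ)*Real.pi*t) := by field_simp
    simpa [h2] using this
  rw [intervalIntegral.integral_eq_sub_of_hasDerivAt (fun t _ => hF t)
    ((Real.continuous_cos.comp (by continuity)).intervalIntegrable 0 1)]
  simp [Real.sin_int_mul_pi]

lemma int_sin_sin (m n : ℕ) (hm : 0 < m) (hn : 0 < n) :
    ∫ t in (0:ℝ)..1, Real.sin ((m:ℝ)*Real.pi*t) * Real.sin ((n:ℝ)*Real.pi*t)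
      = if m = n then 1/2 else 0 := by
  have key : ∀ t : ℝ, Real.sin ((m:ℝ)*Real.pi*t) * Real.sin ((n:ℝ)*Real.pi*t)
      = (Real.cos (((m:ℝ)-(n:ℝ))*Real.pi*t) - Real.cos (((m:ℝ)+(n:ℝ))*Real.pi*t))/2 := by
    intro t
    have e1 : ((m:ℝ)-(n:ℝ))*Real.pi*t = (m:ℝ)*Real.pi*t - (n:ℝ)*Real.pi*t := by ring
    have e2 : ((m:ℝ)+(n:ℝ))*Real.pi*t = (m:ℝ)*Real.pi*t + (n:ℝ)*Real.pi*t := by ring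
    rw [e1, e2, Real.cos_sub, Real.cos_add]; ring
  rw [intervalIntegral.integral_congr (fun t _ => key t)]
  have i1 : IntervalIntegrable (fun t => Real.cos (((m:ℝ)-(n:ℝ))*Real.pi*t)) MeasureTheory.volume 0 1 :=
    (Real.continuous_cos.comp (by continuity)).intervalIntegrable 0 1
  have i2 : IntervalIntegrable (fun t => Real.cos (((m:ℝ)+(n:ℝ))*Real.pi*t)) MeasureTheory.volume 0 1 :=
    (Real.continuous_cos.comp (by continuity)).intervalIntegrable 0 1
  rw [intervalIntegral.integral_div, intervalIntegral.integral_sub i1 i2]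
  have h2 := int_cos_pi ((m:ℤ)+(n:ℤ)) (by omega)
  push_cast at h2
  rw [h2]
  by_cases h : m = n
  · subst h
    have h1 : ∫ t in (0:ℝ)..1, Real.cos (((m:ℝ)-(m:ℝ))*Real.pi*t) = 1 := by simp
    rw [h1]; simp
  · have h1 := int_cos_pi ((m:ℤ)-(n:ℤ)) (by omega)
    push_cast at h1
    rw [h1]; simp [h]

lemma coeffs_zero {m1 m2 m3 : ℕ} (h1 : 0 < m1) (h12 : m1 < m2) (h23 : m2 < m3)
    {A B C : ℝ}
    (h : ∀ t ∈ Set.Icc (0:ℝ) 1,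
      A * Real.sin ((m1:ℝ)*Real.pi*t) + B * Real.sin ((m2:ℝ)*Real.pi*t)
        + C * Real.sin ((m3:ℝ)*Real.pi*t) = 0) :
    A = 0 ∧ B = 0 ∧ C = 0 := by
  have h2 : 0 < m2 := h1.trans h12
  have h3 : 0 < m3 := h2.trans h23
  have main : ∀ j : ℕ, 0 < j →
      A * (if m1 = j then (1:ℝ)/2 else 0) + B * (if m2 = j then (1:ℝ)/2 else 0)
        + C * (if m3 = j then (1:ℝ)/2 else 0) = 0 := by
    intro j hj
    have hint : ∀ m : ℕ, IntervalIntegrable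
        (fun t => Real.sin ((m:ℝ)*Real.pi*t) * Real.sin ((j:ℝ)*Real.pi*t))
        MeasureTheory.volume 0 1 := fun m => (by continuity :
        Continuous fun t => Real.sin ((m:ℝ)*Real.pi*t) * Real.sin ((j:ℝ)*Real.pi*t)).intervalIntegrable 0 1
    have e0 : (∫ t in (0:ℝ)..1,
        (A * (Real.sin ((m1:ℝ)*Real.pi*t) * Real.sin ((j:ℝ)*Real.pi*t))
          + B * (Real.sin ((m2:ℝ)*Real.pi*t) * Real.sin ((j:ℝ)*Real.pi*t))
          + C * (Real.sin ((m3:ℝ)*Real.pi*t) * Real.sin ((j:ℝ)*Real.pi*t)))) = 0 := by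
      rw [intervalIntegral.integral_congr (g := fun _ => (0:ℝ))]
      · simp
      · intro t ht
        rw [Set.uIcc_of_le (by norm_num : (0:ℝ) ≤ 1)] at ht
        have h0 := h t ht
        show A * (Real.sin ((m1:ℝ)*Real.pi*t) * Real.sin ((j:ℝ)*Real.pi*t))
          + B * (Real.sin ((m2:ℝ)*Real.pi*t) * Real.sin ((j:ℝ)*Real.pi*t))
          + C * (Real.sin ((m3:ℝ)*Real.pi*t) * Real.sin ((j:ℝ)*Real.pi*t)) = 0
        calc A * (Real.sin ((m1:ℝ)*Real.pi*t) * Real.sin ((j:ℝ)*Real.pi*t))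
              + B * (Real.sin ((m2:ℝ)*Real.pi*t) * Real.sin ((j:ℝ)*Real.pi*t))
              + C * (Real.sin ((m3:ℝ)*Real.pi*t) * Real.sin ((j:ℝ)*Real.pi*t))
            = (A * Real.sin ((m1:ℝ)*Real.pi*t) + B * Real.sin ((m2:ℝ)*Real.pi*t)
              + C * Real.sin ((m3:ℝ)*Real.pi*t)) * Real.sin ((j:ℝ)*Real.pi*t) := by ring
          _ = 0 := by rw [h0]; ring
    rw [intervalIntegral.integral_add (((hint m1).const_mul A).add ((hint m2).const_mul B)) ((hint m3).const_mul C),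
        intervalIntegral.integral_add ((hint m1).const_mul A) ((hint m2).const_mul B),
        intervalIntegral.integral_const_mul, intervalIntegral.integral_const_mul,
        intervalIntegral.integral_const_mul,
        int_sin_sin m1 j h1 hj, int_sin_sin m2 j h2 hj, int_sin_sin m3 j h3 hj] at e0
    exact e0
  have e1 := main m1 h1
  have e2 := main m2 h2
  have e3 := main m3 h3
  have ne12 : m1 ≠ m2 := h12.ne
  have ne13 : m1 ≠ m3 := (h12.trans h23).ne
  have ne23 : m2 ≠ m3 := h23.ne
  simp [ne12, ne13, ne23, ne12.symm, ne13.symm, ne23.symm] at e1 e2 e3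
  exact ⟨e1, e2, e3⟩

lemma hasDerivAt_ee (n : ℕ) (t : ℝ) :
    HasDerivAt (ee n) (Real.sqrt 2 * (Real.cos ((n:ℝ)*Real.pi*t) * ((n:ℝ)*Real.pi))) t := by
  have h1 : HasDerivAt (fun t : ℝ => (n:ℝ)*Real.pi*t) ((n:ℝ)*Real.pi) t := by
    simpa using (hasDerivAt_id t).const_mul ((n:ℝ)*Real.pi)
  exact ((Real.hasDerivAt_sin _).comp t h1).const_mul (Real.sqrt 2)

lemma hasDerivAt_ee' (n : ℕ) (t : ℝ) :
    HasDerivAt (fun t => Real.sqrt 2 * (Real.cos ((n:ℝ)*Real.pi*t) * ((n:ℝ)*Real.pi)))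
      (-(lam n * ee n t)) t := by
  have h1 : HasDerivAt (fun t : ℝ => (n:ℝ)*Real.pi*t) ((n:ℝ)*Real.pi) t := by
    simpa using (hasDerivAt_id t).const_mul ((n:ℝ)*Real.pi)
  have := (((Real.hasDerivAt_cos _).comp t h1).mul_const ((n:ℝ)*Real.pi)).const_mul (Real.sqrt 2)
  refine this.congr_deriv ?_
  simp [lam, ee]; ring

lemma iteratedDeriv_two_comb (a b c : ℝ) (m n p : ℕ) :
    iteratedDeriv 2 (fun t => a * ee m t + b * ee n t + c * ee p t)
      = fun t => (-(a * lam m)) * ee m t + (-(b * lam n)) * ee n t + (-(c * lam p)) * ee p t := by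
  have hd1 : deriv (fun t => a * ee m t + b * ee n t + c * ee p t)
      = fun t => a * (Real.sqrt 2 * (Real.cos ((m:ℝ)*Real.pi*t) * ((m:ℝ)*Real.pi)))
        + b * (Real.sqrt 2 * (Real.cos ((n:ℝ)*Real.pi*t) * ((n:ℝ)*Real.pi)))
        + c * (Real.sqrt 2 * (Real.cos ((p:ℝ)*Real.pi*t) * ((p:ℝ)*Real.pi))) := by
    funext t
    exact ((((hasDerivAt_ee m t).const_mul a).add ((hasDerivAt_ee n t).const_mul b)).add
      ((hasDerivAt_ee p t).const_mul c)).deriv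
  rw [show (2:ℕ) = 1+1 from rfl, iteratedDeriv_succ, iteratedDeriv_one, hd1]
  funext t
  have := ((((hasDerivAt_ee' m t).const_mul a).add ((hasDerivAt_ee' n t).const_mul b)).add
      ((hasDerivAt_ee' p t).const_mul c)).deriv
  refine this.trans ?_; ring

lemma iteratedDeriv_four_comb (a b c : ℝ) (m n p : ℕ) :
    iteratedDeriv 4 (fun t => a * ee m t + b * ee n t + c * ee p t)
      = fun t => (a * lam m ^ 2) * ee m t + (b * lam n ^ 2) * ee n t + (c * lam p ^ 2) * ee p t := by
  have h4 : iteratedDeriv 4 (fun t => a * ee m t + b * ee n t + c * ee p t)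
      = iteratedDeriv 2 (iteratedDeriv 2 (fun t => a * ee m t + b * ee n t + c * ee p t)) := by
    simp only [iteratedDeriv_eq_iterate]
    exact (Function.iterate_add_apply deriv 2 2 _).symm
  rw [h4, iteratedDeriv_two_comb, iteratedDeriv_two_comb]
  funext t; ring

lemma key_alg (L1 L2 L3 A k : ℝ) (hk : 0 < k) (h0 : 0 < L1) (h12 : L1 < L2) (h23 : L2 < L3)
    (H1 : L1^2 + A*L1 = 0 ∨ L1^2 + A*L1 = -(2*k))
    (H2 : L2^2 + A*L2 = 0 ∨ L2^2 + A*L2 = -(2*k))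
    (H3 : L3^2 + A*L3 = 0 ∨ L3^2 + A*L3 = -(2*k)) :
    L1 + L2 = L3 := by
  have h02 : 0 < L2 := h0.trans h12
  have h03 : 0 < L3 := h02.trans h23
  have root : ∀ L : ℝ, 0 < L → L^2 + A*L = 0 → A = -L := by
    intro L hL hE
    have : L * (L + A) = 0 := by linear_combination hE
    rcases mul_eq_zero.mp this with h | h
    · exact absurd h hL.ne'
    · linarith
  rcases H1 with e1 | e1 <;> rcases H2 with e2 | e2 <;> rcases H3 with e3 | e3
  · -- 0,0,*
    have a1 := root L1 h0 e1; have a2 := root L2 h02 e2; linarith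
  · have a1 := root L1 h0 e1; have a2 := root L2 h02 e2; linarith
  · -- 0,-2k,0
    have a1 := root L1 h0 e1; have a3 := root L3 h03 e3; linarith
  · -- 0,-2k,-2k : A = -L1, L2²-L1L2 = -2k but L2>L1 gives pos, contra
    have a1 := root L1 h0 e1
    nlinarith [mul_pos h02 (sub_pos.mpr h12)]
  · -- -2k,0,0
    have a2 := root L2 h02 e2; have a3 := root L3 h03 e3; linarith
  · -- -2k,0,-2k : A=-L2, L3²-L2L3=-2k, L3>L2 contra
    have a2 := root L2 h02 e2
    nlinarith [mul_pos h03 (sub_pos.mpr h23)]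
  · -- -2k,-2k,0 : the good case
    have a3 := root L3 h03 e3
    have hfac : (L1 - L2) * (L1 + L2 - L3) = 0 := by
      rw [a3] at e1 e2; linear_combination e1 - e2
    rcases mul_eq_zero.mp hfac with h | h
    · linarith
    · linarith
  · -- -2k,-2k,-2k
    have f12 : (L1 - L2) * (L1 + L2 + A) = 0 := by linear_combination e1 - e2
    have f13 : (L1 - L3) * (L1 + L3 + A) = 0 := by linear_combination e1 - e3
    rcases mul_eq_zero.mp f12 with h | h
    · linarith
    · rcases mul_eq_zero.mp f13 with h' | h'
      · linarith
      · linarith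

lemma pair_alg (L A k xx pp : ℝ) (hx : xx ≠ 0)
    (hC : xx*L^2 + A*(xx*L) + k*(xx-pp) = 0)
    (hD : pp*L^2 + A*(pp*L) - k*(xx-pp) = 0) :
    L^2 + A*L = 0 ∨ L^2 + A*L = -(2*k) := by
  by_cases hf : L^2 + A*L = 0
  · exact Or.inl hf
  · right
    have hsum : (xx+pp)*(L^2+A*L) = 0 := by linear_combination hC + hD
    have hxp : pp = -xx := by
      rcases mul_eq_zero.mp hsum with h | h
      · linarith
      · exact absurd h hf
    have : xx*(L^2+A*L+2*k) = 0 := by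
      rw [hxp] at hC; linear_combination hC
    rcases mul_eq_zero.mp this with h | h
    · exact absurd h hx
    · linarith


theorem stmt10 (β ϱ k : ℝ) (hϱ : 0 < ϱ) (hk : 0 < k)
    (n₁ n₂ n₃ : ℕ) (hn₁ : 0 < n₁) (h12 : n₁ < n₂) (h23 : n₂ < n₃)
    (x y z p q r : ℝ) (hx : x ≠ 0) (hy : y ≠ 0) (hz : z ≠ 0)
    (hp : p ≠ 0) (hq : q ≠ 0) (hr : r ≠ 0)
    (hsol : DBSol β ϱ k (fun t => x * ee n₁ t + y * ee n₂ t + z * ee n₃ t)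
      (fun t => p * ee n₁ t + q * ee n₂ t + r * ee n₃ t))
    (hE : energy (fun t => x * ee n₁ t + y * ee n₂ t + z * ee n₃ t)
      = energy (fun t => p * ee n₁ t + q * ee n₂ t + r * ee n₃ t)) :
    lam n₁ + lam n₂ = lam n₃ ∧ n₁ ^ 2 + n₂ ^ 2 = n₃ ^ 2 := by
  obtain ⟨_, _, hu, hv, _⟩ := hsol
  set A : ℝ := β + ϱ * energy (fun t => x * ee n₁ t + y * ee n₂ t + z * ee n₃ t) with hA
  have hAv : β + ϱ * energy (fun t => p * ee n₁ t + q * ee n₂ t + r * ee n₃ t) = A := by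
    rw [hA, hE]
  have s2 : Real.sqrt 2 ≠ 0 := by positivity
  -- coefficient equations for u
  have hu' : ∀ t ∈ Set.Icc (0:ℝ) 1,
      (Real.sqrt 2 * (x*lam n₁^2 + A*(x*lam n₁) + k*(x-p))) * Real.sin ((n₁:ℝ)*Real.pi*t)
      + (Real.sqrt 2 * (y*lam n₂^2 + A*(y*lam n₂) + k*(y-q))) * Real.sin ((n₂:ℝ)*Real.pi*t)
      + (Real.sqrt 2 * (z*lam n₃^2 + A*(z*lam n₃) + k*(z-r))) * Real.sin ((n₃:ℝ)*Real.pi*t) = 0 := by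
    intro t ht
    have h0 := hu t ht
    rw [iteratedDeriv_four_comb, iteratedDeriv_two_comb] at h0
    simp only [ee] at h0 ⊢
    linear_combination h0
  have hv' : ∀ t ∈ Set.Icc (0:ℝ) 1,
      (Real.sqrt 2 * (p*lam n₁^2 + A*(p*lam n₁) - k*(x-p))) * Real.sin ((n₁:ℝ)*Real.pi*t)
      + (Real.sqrt 2 * (q*lam n₂^2 + A*(q*lam n₂) - k*(y-q))) * Real.sin ((n₂:ℝ)*Real.pi*t)
      + (Real.sqrt 2 * (r*lam n₃^2 + A*(r*lam n₃) - k*(z-r))) * Real.sin ((n₃:ℝ)*Real.pi*t) = 0 := by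
    intro t ht
    have h0 := hv t ht
    rw [hAv, iteratedDeriv_four_comb, iteratedDeriv_two_comb] at h0
    simp only [ee] at h0 ⊢
    linear_combination h0
  obtain ⟨cu1, cu2, cu3⟩ := coeffs_zero hn₁ h12 h23 hu'
  obtain ⟨cv1, cv2, cv3⟩ := coeffs_zero hn₁ h12 h23 hv'
  rw [mul_eq_zero] at cu1 cu2 cu3 cv1 cv2 cv3
  replace cu1 := cu1.resolve_left s2
  replace cu2 := cu2.resolve_left s2
  replace cu3 := cu3.resolve_left s2
  replace cv1 := cv1.resolve_left s2
  replace cv2 := cv2.resolve_left s2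
  replace cv3 := cv3.resolve_left s2
  have H1 := pair_alg (lam n₁) A k x p hx cu1 cv1
  have H2 := pair_alg (lam n₂) A k y q hy cu2 cv2
  have H3 := pair_alg (lam n₃) A k z r hz cu3 cv3
  have hpi2 : (0:ℝ) < Real.pi ^ 2 := by positivity
  have hL1 : 0 < lam n₁ := by
    have : (0:ℝ) < (n₁:ℝ)^2 := by positivity
    exact mul_pos this hpi2
  have hL12 : lam n₁ < lam n₂ := by
    have : ((n₁:ℝ))^2 < ((n₂:ℝ))^2 := by
      have : (n₁:ℝ) < (n₂:ℝ) := by exact_mod_cast h12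
      nlinarith [Nat.cast_nonneg (α := ℝ) n₁]
    exact mul_lt_mul_of_pos_right this hpi2
  have hL23 : lam n₂ < lam n₃ := by
    have : ((n₂:ℝ))^2 < ((n₃:ℝ))^2 := by
      have : (n₂:ℝ) < (n₃:ℝ) := by exact_mod_cast h23
      nlinarith [Nat.cast_nonneg (α := ℝ) n₂]
    exact mul_lt_mul_of_pos_right this hpi2
  have hmain : lam n₁ + lam n₂ = lam n₃ := key_alg _ _ _ A k hk hL1 hL12 hL23 H1 H2 H3
  refine ⟨hmain, ?_⟩
  have : (((n₁:ℝ))^2 + ((n₂:ℝ))^2) * Real.pi^2 = ((n₃:ℝ))^2 * Real.pi^2 := by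
    simp only [lam] at hmain; linarith
  have h2 : ((n₁:ℝ))^2 + ((n₂:ℝ))^2 = ((n₃:ℝ))^2 := mul_right_cancel₀ hpi2.ne' this
  exact_mod_cast h2
end
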